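/- The stabilizing S–Heun operators L, M₁, M₂ on the quadratic grid satisfy the quadratic algebra relations [L, M₁] = 2L², [L, M₂] = {M₁, L}, and [M₁, M₂] = {M₂, L} − 4L², where each relation holds pointwise: for every function f : ℂ → ℂ and every x ∈ ℂ with x(x−1)(x+1) ≠ 0, both sides applied to f agree at x. -/

import Mathlib

/-! Each side of a relation, applied to f at x, is a combination of f (x + 2), f x and
f (x - 2) with rational coefficients over 16x(x ± 1), so each relation is an identity between
these coefficients. -/

noncomputable section

/-- The S–Heun lowering operator L on the quadratic grid λ_x = x². -/
def opL (f : ℂ → ℂ) : ℂ → ℂ := fun x => (f (x + 1) - f (x - 1)) / (4 * x)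

/-- The stabilizing S–Heun operator M₁ on the quadratic grid. -/
def opM1 (f : ℂ → ℂ) : ℂ → ℂ :=
  fun x => ((2 * x - 1) * f (x + 1) + (2 * x + 1) * f (x - 1)) / (4 * x)

/-- The stabilizing S–Heun operator M₂ on the quadratic grid. -/
def opM2 (f : ℂ → ℂ) : ℂ → ℂ :=
  fun x => ((x ^ 2 + (x - 1) ^ 2) * f (x + 1) - ((x + 1) ^ 2 + x ^ 2) * f (x - 1)) / (4 * x)

/-- The raising S–Heun operator R₁ = λ_x M₁ on the quadratic grid. -/
def opR1 (f : ℂ → ℂ) : ℂ → ℂ := fun x => x ^ 2 * opM1 f x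

/-- The raising S–Heun operator R₂ = λ_x M₂ on the quadratic grid. -/
def opR2 (f : ℂ → ℂ) : ℂ → ℂ := fun x => x ^ 2 * opM2 f x

theorem opL_opM1_sub_opM1_opL (f : ℂ → ℂ) {x : ℂ} (hx_sub : x - 1 ≠ 0) (hx_add : x + 1 ≠ 0) :
    opL (opM1 f) x - opM1 (opL f) x = 2 * opL (opL f) x := by
  simp only [opL, opM1, add_sub_cancel_right, sub_add_cancel]
  field_simp
  ring

theorem opL_opM2_sub_opM2_opL (f : ℂ → ℂ) {x : ℂ} (hx_sub : x - 1 ≠ 0) (hx_add : x + 1 ≠ 0) :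
    opL (opM2 f) x - opM2 (opL f) x = opM1 (opL f) x + opL (opM1 f) x := by
  simp only [opL, opM1, opM2, add_sub_cancel_right, sub_add_cancel]
  field_simp
  ring

theorem opM1_opM2_sub_opM2_opM1 (f : ℂ → ℂ) {x : ℂ} (hx_sub : x - 1 ≠ 0)
    (hx_add : x + 1 ≠ 0) :
    opM1 (opM2 f) x - opM2 (opM1 f) x
      = (opM2 (opL f) x + opL (opM2 f) x) - 4 * opL (opL f) x := by
  simp only [opL, opM1, opM2, add_sub_cancel_right, sub_add_cancel]
  field_simp
  ring

theorem stmt6 (f : ℂ → ℂ) (x : ℂ) (hx : x * (x - 1) * (x + 1) ≠ 0) :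
    opL (opM1 f) x - opM1 (opL f) x = 2 * opL (opL f) x ∧
    opL (opM2 f) x - opM2 (opL f) x = opM1 (opL f) x + opL (opM1 f) x ∧
    opM1 (opM2 f) x - opM2 (opM1 f) x
      = (opM2 (opL f) x + opL (opM2 f) x) - 4 * opL (opL f) x := by
  have hx_sub : x - 1 ≠ 0 := right_ne_zero_of_mul (left_ne_zero_of_mul hx)
  have hx_add : x + 1 ≠ 0 := right_ne_zero_of_mul hx
  exact ⟨opL_opM1_sub_opM1_opL f hx_sub hx_add, opL_opM2_sub_opM2_opL f hx_sub hx_add,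
    opM1_opM2_sub_opM2_opM1 f hx_sub hx_add⟩
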